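/- Every plane (linearly embedded P^2) contained in Gr(2,5) under the Plücker embedding is either the set of lines in a fixed hyperplane P^3 ⊂ P^4 passing through a fixed point p ∈ P^3 (σ_{3,1}-plane), or the set of all lines contained in a fixed plane P^2 ⊂ P^4 (σ_{2,2}-plane). Consequently the Fano variety of planes in Gr(2,5) is the disjoint union Gr(1,4,5) ⊔ Gr(3,5). -/

import Mathlib

set_option synthInstance.maxHeartbeats 1000000
set_option maxHeartbeats 1000000

open ExteriorAlgebra

/-- Decomposable degree-2 elements of the exterior algebra. -/
def Decomposable (ω : ExteriorAlgebra ℂ (Fin 5 → ℂ)) : Prop :=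
  ∃ x y : Fin 5 → ℂ, ω = ιMulti ℂ 2 ![x, y]

/-- The Plücker line of a 2-plane `W ⊂ ℂ⁵`. -/
noncomputable def pluckerSpan (W : Submodule ℂ (Fin 5 → ℂ)) :
    Submodule ℂ (ExteriorAlgebra ℂ (Fin 5 → ℂ)) :=
  Submodule.span ℂ {ω | ∃ x ∈ W, ∃ y ∈ W, ω = ιMulti ℂ 2 ![x, y]}

/-- A plane in `Gr(2,5) ⊂ ℙ⁹`: a 3-dimensional subspace of `⋀²ℂ⁵` all of whose
elements are decomposable. -/
def IsPlaneInG (P : Submodule ℂ (ExteriorAlgebra ℂ (Fin 5 → ℂ))) : Prop :=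
  Module.finrank ℂ P = 3 ∧ ∀ ω ∈ P, Decomposable ω

namespace Stmt7Aux

open Set

noncomputable section

abbrev Vec : Type := Fin 5 → ℂ
abbrev ExtV : Type := ExteriorAlgebra ℂ Vec

/-! ### Nonvanishing of wedges of independent families -/

theorem iMulti_ne_zero {k : ℕ} {v : Fin k → Vec} (hv : LinearIndependent ℂ v) :
    ιMulti ℂ k v ≠ 0 := by
  classical
  set f : (Fin k → ℂ) →ₗ[ℂ] Vec := (Pi.basisFun ℂ (Fin k)).constr ℂ v with hf
  have hfap : ∀ g, f g = ∑ i, g i • v i := by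
    intro g; rw [hf, Module.Basis.constr_apply_fintype]; simp
  have hinj : LinearMap.ker f = ⊥ := by
    rw [LinearMap.ker_eq_bot']
    intro g hg
    rw [hfap] at hg
    funext i
    exact Fintype.linearIndependent_iff.mp hv g hg i
  obtain ⟨L, hL⟩ := f.exists_leftInverse_of_injective hinj
  set g : Vec [⋀^Fin k]→ₗ[ℂ] ℂ := (Matrix.detRowAlternating (n := Fin k) (R := ℂ)).compLinearMap L
    with hg
  have hgv : g v = 1 := by
    have hLv : ∀ i, L (v i) = Pi.single i 1 := by
      intro i
      have : f (Pi.single i 1) = v i := by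
        rw [hfap]; simp [Pi.single_apply]
      rw [← this, ← LinearMap.comp_apply, hL, LinearMap.id_apply]
    rw [hg]
    simp only [AlternatingMap.compLinearMap_apply]
    have : (L ∘ v) = fun i => Pi.single i 1 := funext hLv
    show Matrix.detRowAlternating (L ∘ v) = 1
    rw [this]
    have : (Matrix.of fun i => (Pi.single i 1 : Fin k → ℂ)) = (1 : Matrix (Fin k) (Fin k) ℂ) := by
      ext i j; simp [Matrix.one_apply, Pi.single_apply, eq_comm]
    show Matrix.det (Matrix.of fun i => (Pi.single i 1 : Fin k → ℂ)) = 1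
    rw [this, Matrix.det_one]
  intro h0
  have := liftAlternating_apply_ιMulti (R := ℂ) (M := Vec) (N := ℂ)
    (fun i => if h : i = k then h ▸ g else 0) v
  rw [h0, map_zero] at this
  simp only [dif_pos rfl] at this
  simp [hgv] at this

/-! ### Products of `ι`'s -/

theorem iota2 (a b : Vec) : ιMulti ℂ 2 ![a, b] = ι ℂ a * ι ℂ b := by
  simp [ιMulti_apply, List.ofFn_succ, mul_assoc]
theorem iota3 (a b c : Vec) : ιMulti ℂ 3 ![a, b, c] = ι ℂ a * ι ℂ b * ι ℂ c := by
  simp [ιMulti_apply, List.ofFn_succ, mul_assoc]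
theorem iota4 (a b c d : Vec) :
    ιMulti ℂ 4 ![a, b, c, d] = ι ℂ a * ι ℂ b * ι ℂ c * ι ℂ d := by
  simp [ιMulti_apply, List.ofFn_succ, mul_assoc]

theorem swap_ii (a b : Vec) : ι ℂ a * ι ℂ b = -(ι ℂ b * ι ℂ a) :=
  eq_neg_of_add_eq_zero_left (ι_add_mul_swap a b)

theorem triple_comm (u x y : Vec) : ι ℂ u * (ι ℂ x * ι ℂ y) = (ι ℂ x * ι ℂ y) * ι ℂ u := by
  rw [← mul_assoc, swap_ii u x, neg_mul, mul_assoc, swap_ii u y, mul_neg, neg_neg, ← mul_assoc]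

theorem quad_comm (x y a b : Vec) :
    (ι ℂ x * ι ℂ y) * (ι ℂ a * ι ℂ b) = (ι ℂ a * ι ℂ b) * (ι ℂ x * ι ℂ y) := by
  rw [← mul_assoc, ← triple_comm a x y, mul_assoc, ← triple_comm b x y, ← mul_assoc, ← mul_assoc]

theorem sq_zero_w (x y : Vec) : (ι ℂ x * ι ℂ y) * (ι ℂ x * ι ℂ y) = 0 := by
  have : ιMulti ℂ 4 ![x, y, x, y] = 0 :=
    AlternatingMap.map_eq_zero_of_eq _ _ (by simp : ![x,y,x,y] 0 = ![x,y,x,y] 2) (by decide)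
  rw [iota4] at this
  rw [← mul_assoc, this]

theorem prod2_ne_zero {a b : Vec} (h : LinearIndependent ℂ ![a, b]) : ι ℂ a * ι ℂ b ≠ 0 :=
  iota2 a b ▸ iMulti_ne_zero h
theorem prod3_ne_zero {a b c : Vec} (h : LinearIndependent ℂ ![a, b, c]) :
    ι ℂ a * ι ℂ b * ι ℂ c ≠ 0 := iota3 a b c ▸ iMulti_ne_zero h
theorem prod4_ne_zero {a b c d : Vec} (h : LinearIndependent ℂ ![a, b, c, d]) :
    ι ℂ a * ι ℂ b * ι ℂ c * ι ℂ d ≠ 0 := iota4 a b c d ▸ iMulti_ne_zero h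

theorem z_aab (a b : Vec) : ι ℂ a * (ι ℂ a * ι ℂ b) = 0 := by
  rw [← mul_assoc, ι_sq_zero, zero_mul]
theorem z_bab (a b : Vec) : ι ℂ b * (ι ℂ a * ι ℂ b) = 0 := by
  rw [← mul_assoc, swap_ii b a, neg_mul, mul_assoc, ι_sq_zero, mul_zero, neg_zero]

theorem z3_bcc (b c : Vec) : (ι ℂ b * ι ℂ c) * ι ℂ c = 0 := by
  rw [mul_assoc, ι_sq_zero, mul_zero]
theorem z3_bcb (b c : Vec) : (ι ℂ b * ι ℂ c) * ι ℂ b = 0 := by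
  rw [← triple_comm, z_aab]

theorem linIndep_pair_of_prod_ne_zero {x y : Vec} (h : ι ℂ x * ι ℂ y ≠ 0) :
    LinearIndependent ℂ ![x, y] := by
  by_contra hli
  rw [linearIndependent_fin2] at hli
  simp only [Matrix.cons_val_zero, Matrix.cons_val_one, Matrix.head_cons] at hli
  push_neg at hli
  rcases eq_or_ne y 0 with hy | hy
  · exact h (by rw [hy, map_zero, mul_zero])
  · obtain ⟨a, ha⟩ := hli hy
    exact h (by rw [← ha, map_smul, smul_mul_assoc, ι_sq_zero, smul_zero])

/-! ### Span utilities -/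

theorem mem_span_pair' {x y u : Vec} :
    u ∈ Submodule.span ℂ (range ![x, y]) ↔ ∃ a b : ℂ, u = a • x + b • y := by
  rw [Matrix.range_cons_cons_empty, Submodule.mem_span_pair]
  constructor
  · rintro ⟨a, b, h⟩; exact ⟨a, b, h.symm⟩
  · rintro ⟨a, b, h⟩; exact ⟨a, b, h.symm⟩

theorem fin2_eta (v : Fin 2 → Vec) : ![v 0, v 1] = v := by
  funext i; fin_cases i <;> rfl
theorem fin3_eta (v : Fin 3 → Vec) : ![v 0, v 1, v 2] = v := by
  funext i; fin_cases i <;> rfl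

theorem finrank_span_fam {n : ℕ} {M : Type} [AddCommGroup M] [Module ℂ M] {v : Fin n → M}
    (hv : LinearIndependent ℂ v) :
    Module.finrank ℂ (Submodule.span ℂ (range v)) = n := by
  rw [finrank_span_eq_card hv, Fintype.card_fin]

theorem exists_span_fam {M : Type} [AddCommGroup M] [Module ℂ M] (W : Submodule ℂ M)
    [FiniteDimensional ℂ W] {n : ℕ} (h : Module.finrank ℂ W = n) :
    ∃ v : Fin n → M, LinearIndependent ℂ v ∧ W = Submodule.span ℂ (range v) := by
  let b := (Module.finBasis ℂ W).reindex (finCongr h)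
  refine ⟨fun i => (b i : M), ?_, ?_⟩
  · exact b.linearIndependent.map' W.subtype W.ker_subtype
  · have : (fun i => (b i : M)) = W.subtype ∘ b := rfl
    rw [this, range_comp, ← Submodule.map_span, b.span_eq, Submodule.map_subtype_top]

/-- The support lemma. -/
theorem mul_pair_eq_zero_iff {x y : Vec} (hxy : LinearIndependent ℂ ![x, y]) (u : Vec) :
    ι ℂ u * (ι ℂ x * ι ℂ y) = 0 ↔ u ∈ Submodule.span ℂ (range ![x, y]) := by
  constructor
  · intro h
    by_contra hu
    exact prod3_ne_zero (hxy.fin_cons hu) (by rw [mul_assoc]; exact h)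
  · rw [mem_span_pair']
    rintro ⟨a, b, rfl⟩
    rw [map_add, map_smul, map_smul, add_mul, smul_mul_assoc, smul_mul_assoc,
      z_aab, z_bab, smul_zero, smul_zero, add_zero]

/-- extend a nonzero vector of a 2-dimensional space to a basis pair -/
theorem exists_pair_basis_containing {W : Submodule ℂ Vec} (hW : Module.finrank ℂ W = 2)
    {v : Vec} (hvW : v ∈ W) (hv : v ≠ 0) :
    ∃ z : Vec, LinearIndependent ℂ ![v, z] ∧ W = Submodule.span ℂ (range ![v, z]) := by
  obtain ⟨u, hu, hspan⟩ := exists_span_fam W hW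
  set x := u 0; set y := u 1
  have hxyW : x ∈ W ∧ y ∈ W := by
    constructor <;> { rw [hspan]; exact Submodule.subset_span (mem_range_self _) }
  have hv' : v ∈ Submodule.span ℂ (range ![x, y]) := by rw [fin2_eta, ← hspan]; exact hvW
  rw [mem_span_pair'] at hv'
  obtain ⟨a, b, hab⟩ := hv'
  have hxy : LinearIndependent ℂ ![x, y] := by rw [fin2_eta]; exact hu
  rcases eq_or_ne a 0 with ha | ha
  · have hb : b ≠ 0 := by rintro rfl; exact hv (by simp [hab, ha])
    refine ⟨x, ?_, ?_⟩
    · rw [LinearIndependent.pair_iff]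
      intro s t hst
      rw [hab, ha, zero_smul, zero_add, smul_smul] at hst
      have := LinearIndependent.pair_iff.mp hxy t (s * b) (by rw [← hst]; ring_nf)
      exact ⟨by simpa [hb] using (mul_eq_zero.mp this.2), this.1⟩
    · apply le_antisymm
      · rw [hspan, ← fin2_eta u, Submodule.span_le]
        rintro w hw
        simp only [Matrix.range_cons_cons_empty] at hw ⊢
        rcases hw with h | h
        · rw [h]; exact Submodule.subset_span (by simp; exact Or.inr rfl)
        · rw [h]
          have hy2 : u 1 = b⁻¹ • v := by show y = _; rw [hab, ha]; match_scalars <;> field_simp <;> ring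
          rw [hy2]
          exact Submodule.smul_mem _ _ (Submodule.subset_span (by simp))
      · rw [Submodule.span_le]
        rintro w hw
        simp only [Matrix.range_cons_cons_empty] at hw
        rcases hw with rfl | rfl
        · exact hvW
        · exact hxyW.1
  · refine ⟨y, ?_, ?_⟩
    · rw [LinearIndependent.pair_iff]
      intro s t hst
      rw [hab] at hst
      rw [smul_add, smul_smul, smul_smul, add_assoc, ← add_smul] at hst
      have := LinearIndependent.pair_iff.mp hxy (s * a) (s * b + t) hst
      have hs : s = 0 := by simpa [ha] using (mul_eq_zero.mp this.1)
      exact ⟨hs, by simpa [hs] using this.2⟩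
    · apply le_antisymm
      · rw [hspan, ← fin2_eta u, Submodule.span_le]
        rintro w hw
        simp only [Matrix.range_cons_cons_empty] at hw ⊢
        rcases hw with h | h
        · rw [h]
          have hx2 : u 0 = a⁻¹ • v - (a⁻¹ * b) • y := by
            show x = _; rw [hab]; match_scalars <;> field_simp <;> ring
          rw [hx2]
          exact Submodule.sub_mem _
            (Submodule.smul_mem _ _ (Submodule.subset_span (by simp)))
            (Submodule.smul_mem _ _ (Submodule.subset_span (by simp)))
        · rw [h]; exact Submodule.subset_span (by simp; exact Or.inr rfl)
      · rw [Submodule.span_le]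
        rintro w hw
        simp only [Matrix.range_cons_cons_empty] at hw
        rcases hw with rfl | rfl
        · exact hvW
        · exact hxyW.2

/-! ### pluckerSpan lemmas -/

theorem wedge_comb (x y : Vec) (a b c d : ℂ) :
    ι ℂ (a • x + b • y) * ι ℂ (c • x + d • y) = (a * d - b * c) • (ι ℂ x * ι ℂ y) := by
  simp only [map_add, map_smul, add_mul, mul_add, smul_mul_assoc, mul_smul_comm, smul_smul,
    ι_sq_zero, smul_zero, add_zero, zero_add, swap_ii y x, smul_neg]
  module

theorem pluckerSpan_mono {W W' : Submodule ℂ Vec} (h : W ≤ W') :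
    pluckerSpan W ≤ pluckerSpan W' := by
  apply Submodule.span_mono
  rintro ω ⟨p, hp, q, hq, rfl⟩
  exact ⟨p, h hp, q, h hq, rfl⟩

theorem mem_pluckerSpan {W : Submodule ℂ Vec} {p q : Vec} (hp : p ∈ W) (hq : q ∈ W) :
    ι ℂ p * ι ℂ q ∈ pluckerSpan W :=
  Submodule.subset_span ⟨p, hp, q, hq, (iota2 p q).symm⟩

theorem pluckerSpan_pair {x y : Vec} :
    pluckerSpan (Submodule.span ℂ (range ![x, y])) = Submodule.span ℂ {ι ℂ x * ι ℂ y} := by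
  apply le_antisymm
  · rw [pluckerSpan, Submodule.span_le]
    rintro ω ⟨p, hp, q, hq, rfl⟩
    rw [mem_span_pair'] at hp hq
    obtain ⟨a, b, rfl⟩ := hp
    obtain ⟨c, d, rfl⟩ := hq
    rw [SetLike.mem_coe, iota2, wedge_comb, Submodule.mem_span_singleton]
    exact ⟨_, rfl⟩
  · rw [Submodule.span_le, singleton_subset_iff]
    exact mem_pluckerSpan (Submodule.subset_span (by simp)) (Submodule.subset_span (by simp))

theorem pluckerSpan_pair_le_iff {x y : Vec} {P : Submodule ℂ (ExteriorAlgebra ℂ Vec)} :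
    pluckerSpan (Submodule.span ℂ (range ![x, y])) ≤ P ↔ ι ℂ x * ι ℂ y ∈ P := by
  rw [pluckerSpan_pair, Submodule.span_le, singleton_subset_iff]; rfl


/-! ### sigma_{3,1} planes -/

def lmap (v : Vec) : Vec →ₗ[ℂ] ExtV := (LinearMap.mulLeft ℂ (ι ℂ v)).comp (ι ℂ)

theorem lmap_apply (v u : Vec) : lmap v u = ι ℂ v * ι ℂ u := rfl

theorem lmap_zero_iff {v : Vec} (hv : v ≠ 0) (u : Vec) :
    ι ℂ v * ι ℂ u = 0 ↔ u ∈ Submodule.span ℂ {v} := by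
  constructor
  · intro h
    by_contra hu
    have hvu : LinearIndependent ℂ ![v, u] := by
      rw [LinearIndependent.pair_iff' hv]
      intro a ha
      exact hu (Submodule.mem_span_singleton.mpr ⟨a, ha⟩)
    exact prod2_ne_zero hvu h
  · intro h
    obtain ⟨a, rfl⟩ := Submodule.mem_span_singleton.mp h
    rw [map_smul, mul_smul_comm, ι_sq_zero, smul_zero]

theorem lmap_rank {v : Vec} (hv : v ≠ 0) {V4 : Submodule ℂ Vec} (hvV : v ∈ V4) :
    Module.finrank ℂ (Submodule.map (lmap v) V4) + 1 = Module.finrank ℂ V4 := by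
  have hspanle : Submodule.span ℂ {v} ≤ V4 := by
    rw [Submodule.span_le, singleton_subset_iff]; exact hvV
  have hker : LinearMap.ker ((lmap v).domRestrict V4)
      = Submodule.comap V4.subtype (Submodule.span ℂ {v}) := by
    ext u
    rw [LinearMap.mem_ker, Submodule.mem_comap, LinearMap.domRestrict_apply,
      ← lmap_zero_iff hv]
    rfl
  have hkerrank : Module.finrank ℂ (LinearMap.ker ((lmap v).domRestrict V4)) = 1 := by
    rw [hker, (Submodule.comapSubtypeEquivOfLe hspanle).finrank_eq]
    exact finrank_span_singleton hv
  have := LinearMap.finrank_range_add_finrank_ker ((lmap v).domRestrict V4)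
  rw [LinearMap.range_domRestrict, hkerrank] at this
  exact this

theorem sigma31_isPlane {v : Vec} (hv : v ≠ 0) {V4 : Submodule ℂ Vec} (hvV : v ∈ V4)
    (h4 : Module.finrank ℂ V4 = 4) : IsPlaneInG (Submodule.map (lmap v) V4) := by
  constructor
  · have := lmap_rank hv hvV
    rw [h4, show (4:ℕ) = 3 + 1 from rfl] at this
    exact Nat.add_right_cancel this
  · rintro ω ⟨u, hu, rfl⟩
    exact ⟨v, u, by rw [iota2]; rfl⟩

theorem sigma31_char {v : Vec} (hv : v ≠ 0) {V4 : Submodule ℂ Vec} (hvV : v ∈ V4)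
    {W : Submodule ℂ Vec} (hW : Module.finrank ℂ W = 2) :
    pluckerSpan W ≤ Submodule.map (lmap v) V4 ↔ (Submodule.span ℂ {v} ≤ W ∧ W ≤ V4) := by
  constructor
  · intro hle
    obtain ⟨u, hu, hspan⟩ := exists_span_fam W hW
    set x := u 0; set y := u 1
    have hxy : LinearIndependent ℂ ![x, y] := by rw [fin2_eta]; exact hu
    have hWs : W = Submodule.span ℂ (range ![x, y]) := by rw [fin2_eta]; exact hspan
    rw [hWs, pluckerSpan_pair_le_iff] at hle
    obtain ⟨z, hz, hzw⟩ := hle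
    have hzw : ι ℂ v * ι ℂ z = ι ℂ x * ι ℂ y := hzw
    have hne : ι ℂ x * ι ℂ y ≠ 0 := prod2_ne_zero hxy
    have hvz : LinearIndependent ℂ ![v, z] := linIndep_pair_of_prod_ne_zero (hzw ▸ hne)
    have hvW : v ∈ W := by
      rw [hWs, ← mul_pair_eq_zero_iff hxy]
      rw [← hzw, z_aab]
    have hzW : z ∈ W := by
      rw [hWs, ← mul_pair_eq_zero_iff hxy]
      rw [← hzw, z_bab]
    constructor
    · rw [Submodule.span_le, singleton_subset_iff]; exact hvW
    · -- W ≤ V4 : x, y ∈ span {v,z} ≤ V4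
      have hx : x ∈ Submodule.span ℂ (range ![v, z]) := by
        rw [← mul_pair_eq_zero_iff hvz, hzw, z_aab]
      have hy : y ∈ Submodule.span ℂ (range ![v, z]) := by
        rw [← mul_pair_eq_zero_iff hvz, hzw, z_bab]
      have hvzV : Submodule.span ℂ (range ![v, z]) ≤ V4 := by
        rw [Submodule.span_le]
        rintro w hw
        simp only [Matrix.range_cons_cons_empty] at hw
        rcases hw with rfl | rfl
        · exact hvV
        · exact hz
      rw [hWs, Submodule.span_le]
      rintro w hw
      simp only [Matrix.range_cons_cons_empty] at hw
      rcases hw with rfl | rfl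
      · exact hvzV hx
      · exact hvzV hy
  · rintro ⟨hvw, hWV⟩
    have hvW : v ∈ W := hvw (Submodule.mem_span_singleton_self v)
    obtain ⟨z, hvz, hWs⟩ := exists_pair_basis_containing hW hvW hv
    rw [hWs, pluckerSpan_pair_le_iff]
    refine ⟨z, hWV ?_, rfl⟩
    rw [hWs]
    exact Submodule.subset_span (by simp)


/-! ### permutation helpers -/

theorem li_pair_of_fam {n : ℕ} {v : Fin n → ExtV} (h : LinearIndependent ℂ v) {i j : Fin n}
    (hij : i ≠ j) : LinearIndependent ℂ ![v i, v j] := by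
  have hinj : Function.Injective (![i, j] : Fin 2 → Fin n) := by
    intro a b hab
    fin_cases a <;> fin_cases b <;> simp_all <;> exact absurd hab hij.symm
  have := h.comp ![i, j] hinj
  have heq : v ∘ ![i, j] = ![v i, v j] := by funext a; fin_cases a <;> rfl
  rwa [heq] at this

theorem li_swap12 {a b c : Vec} (h : LinearIndependent ℂ ![a, b, c]) :
    LinearIndependent ℂ ![a, c, b] := by
  have := h.comp (Equiv.swap 1 2) (Equiv.injective _)
  have heq : ![a, b, c] ∘ (Equiv.swap (1 : Fin 3) 2) = ![a, c, b] := by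
    funext i
    fin_cases i <;> simp [Equiv.swap_apply_def] <;> rfl
  rwa [heq] at this

theorem li_swap23' {a b c d : Vec} (h : LinearIndependent ℂ ![a, b, c, d]) :
    LinearIndependent ℂ ![a, b, d, c] := by
  have := h.comp (Equiv.swap 2 3) (Equiv.injective _)
  have heq : ![a, b, c, d] ∘ (Equiv.swap (2 : Fin 4) 3) = ![a, b, d, c] := by
    funext i
    fin_cases i <;> simp [Equiv.swap_apply_def] <;> rfl
  rwa [heq] at this

/-! ### sigma_{2,2} planes -/

theorem mem_span_triple' {e : Fin 3 → Vec} {u : Vec} :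
    u ∈ Submodule.span ℂ (range e) ↔ ∃ a b c : ℂ, u = a • e 0 + b • e 1 + c • e 2 := by
  rw [Submodule.mem_span_range_iff_exists_fun]
  constructor
  · rintro ⟨c, hc⟩
    exact ⟨c 0, c 1, c 2, by rw [← hc, Fin.sum_univ_three]⟩
  · rintro ⟨a, b, c, rfl⟩
    exact ⟨![a, b, c], by rw [Fin.sum_univ_three]; rfl⟩

theorem wedge_comb3 (e₀ e₁ e₂ : Vec) (a b c d f g : ℂ) :
    ι ℂ (a • e₀ + b • e₁ + c • e₂) * ι ℂ (d • e₀ + f • e₁ + g • e₂) =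
      (a * f - b * d) • (ι ℂ e₀ * ι ℂ e₁) + (a * g - c * d) • (ι ℂ e₀ * ι ℂ e₂)
        + (b * g - c * f) • (ι ℂ e₁ * ι ℂ e₂) := by
  simp only [map_add, map_smul, add_mul, mul_add, smul_mul_assoc, mul_smul_comm, smul_smul,
    ι_sq_zero, smul_zero, add_zero, zero_add, swap_ii e₁ e₀, swap_ii e₂ e₀, swap_ii e₂ e₁,
    smul_neg]
  module

theorem wedges3_indep {e : Fin 3 → Vec} (he : LinearIndependent ℂ e) :
    LinearIndependent ℂ
      ![ι ℂ (e 0) * ι ℂ (e 1), ι ℂ (e 0) * ι ℂ (e 2), ι ℂ (e 1) * ι ℂ (e 2)] := by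
  have he' : LinearIndependent ℂ ![e 0, e 1, e 2] := by rw [fin3_eta]; exact he
  rw [Fintype.linearIndependent_iff]
  intro g hg
  rw [Fin.sum_univ_three] at hg
  simp only [Matrix.cons_val_zero, Matrix.cons_val_one, Matrix.head_cons,
    Matrix.cons_val_two, Matrix.tail_cons] at hg
  have h0 : g 0 = 0 := by
    have := congrArg (· * ι ℂ (e 2)) hg
    simp only [add_mul, smul_mul_assoc, zero_mul] at this
    rw [mul_assoc (ι ℂ (e 0)) (ι ℂ (e 2)), ι_sq_zero, mul_zero, smul_zero,
      mul_assoc (ι ℂ (e 1)) (ι ℂ (e 2)), ι_sq_zero, mul_zero, smul_zero,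
      add_zero, add_zero] at this
    exact (smul_eq_zero.mp this).resolve_right (prod3_ne_zero he')
  have h1 : g 1 = 0 := by
    have := congrArg (· * ι ℂ (e 1)) hg
    simp only [add_mul, smul_mul_assoc, zero_mul] at this
    rw [mul_assoc (ι ℂ (e 0)) (ι ℂ (e 1)), ι_sq_zero, mul_zero, smul_zero,
      mul_assoc (ι ℂ (e 1)) (ι ℂ (e 2)), swap_ii (e 2) (e 1), mul_neg,
      ← mul_assoc, ι_sq_zero, zero_mul, neg_zero, smul_zero, zero_add, add_zero] at this
    exact (smul_eq_zero.mp this).resolve_right (prod3_ne_zero (li_swap12 he'))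
  have h2 : g 2 = 0 := by
    have := congrArg (· * ι ℂ (e 0)) hg
    simp only [add_mul, smul_mul_assoc, zero_mul] at this
    rw [← triple_comm (e 0) (e 0) (e 1), z_aab, smul_zero,
      ← triple_comm (e 0) (e 0) (e 2), z_aab, smul_zero,
      ← triple_comm (e 0) (e 1) (e 2), ← mul_assoc, zero_add, zero_add] at this
    exact (smul_eq_zero.mp this).resolve_right (prod3_ne_zero he')
  intro i; fin_cases i <;> assumption


theorem pluckerSpan_triple {e : Fin 3 → Vec} (he : LinearIndependent ℂ e) :
    pluckerSpan (Submodule.span ℂ (range e)) =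
      Submodule.span ℂ
        (range ![ι ℂ (e 0) * ι ℂ (e 1), ι ℂ (e 0) * ι ℂ (e 2), ι ℂ (e 1) * ι ℂ (e 2)]) := by
  apply le_antisymm
  · rw [pluckerSpan, Submodule.span_le]
    rintro ω ⟨p, hp, q, hq, rfl⟩
    rw [SetLike.mem_coe] at *
    rw [mem_span_triple'] at hp hq
    obtain ⟨a, b, c, rfl⟩ := hp
    obtain ⟨d, f, g, rfl⟩ := hq
    rw [iota2, wedge_comb3]
    refine Submodule.add_mem _ (Submodule.add_mem _ ?_ ?_) ?_ <;>
      exact Submodule.smul_mem _ _ (Submodule.subset_span (by simp [Matrix.range_cons]))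
  · rw [Submodule.span_le]
    rintro ω hω
    simp only [Matrix.range_cons, Matrix.range_empty, Set.union_empty, Set.union_singleton,
      mem_insert_iff, mem_singleton_iff] at hω
    have hm : ∀ i, e i ∈ Submodule.span ℂ (range e) := fun i => Submodule.subset_span ⟨i, rfl⟩
    rcases hω with rfl | rfl | rfl <;> exact mem_pluckerSpan (hm _) (hm _)

theorem pluckerSpan_rank3 {V3 : Submodule ℂ Vec} (h3 : Module.finrank ℂ V3 = 3) :
    ∃ g : Fin 3 → ExtV, LinearIndependent ℂ g ∧
      pluckerSpan V3 = Submodule.span ℂ (range g) := by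
  obtain ⟨e, he, hsp⟩ := exists_span_fam V3 h3
  refine ⟨![ι ℂ (e 0) * ι ℂ (e 1), ι ℂ (e 0) * ι ℂ (e 2), ι ℂ (e 1) * ι ℂ (e 2)],
    wedges3_indep he, ?_⟩
  rw [hsp, pluckerSpan_triple he]

theorem sigma22_char {V3 : Submodule ℂ Vec} (h3 : Module.finrank ℂ V3 = 3)
    {W : Submodule ℂ Vec} (hW : Module.finrank ℂ W = 2) :
    pluckerSpan W ≤ pluckerSpan V3 ↔ W ≤ V3 := by
  constructor
  · intro hle
    obtain ⟨e, he, hsp⟩ := exists_span_fam V3 h3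
    obtain ⟨u', hu', hWsp⟩ := exists_span_fam W hW
    set x := u' 0; set y := u' 1
    have hxy : LinearIndependent ℂ ![x, y] := by rw [fin2_eta]; exact hu'
    have hWs : W = Submodule.span ℂ (range ![x, y]) := by rw [fin2_eta]; exact hWsp
    rw [hWs, pluckerSpan_pair_le_iff] at hle
    rw [hsp, pluckerSpan_triple he, Submodule.mem_span_range_iff_exists_fun] at hle
    obtain ⟨c, hc⟩ := hle
    rw [Fin.sum_univ_three] at hc
    simp only [Matrix.cons_val_zero, Matrix.cons_val_one, Matrix.head_cons,
      Matrix.cons_val_two, Matrix.tail_cons] at hc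
    -- show each u ∈ W lies in V3
    intro u huW
    have hu0 : ι ℂ u * (ι ℂ x * ι ℂ y) = 0 := by
      rw [mul_pair_eq_zero_iff hxy]
      rw [hWs] at huW; exact huW
    by_contra huV
    have hus : u ∉ Submodule.span ℂ (range e) := by rwa [← hsp]
    have hq : LinearIndependent ℂ (Fin.cons u e : Fin 4 → Vec) := he.fin_cons hus
    have hq4 : LinearIndependent ℂ ![u, e 0, e 1, e 2] := by
      have : ![u, e 0, e 1, e 2] = Fin.cons u e := by
        funext i
        refine i.cases rfl (fun j => ?_)
        rw [Fin.cons_succ, Matrix.cons_val_succ, fin3_eta]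
      rwa [this]
    -- expand ι u * (Σ c i • w_i) = 0
    have hexp : c 0 • (ι ℂ u * (ι ℂ (e 0) * ι ℂ (e 1)))
        + c 1 • (ι ℂ u * (ι ℂ (e 0) * ι ℂ (e 2)))
        + c 2 • (ι ℂ u * (ι ℂ (e 1) * ι ℂ (e 2))) = 0 := by
      have h' : ι ℂ u * (c 0 • (ι ℂ (e 0) * ι ℂ (e 1)) + c 1 • (ι ℂ (e 0) * ι ℂ (e 2))
          + c 2 • (ι ℂ (e 1) * ι ℂ (e 2))) = 0 := by rw [hc]; exact hu0
      rw [mul_add, mul_add, mul_smul_comm, mul_smul_comm, mul_smul_comm] at h'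
      exact h'
    have hc0 : c 0 = 0 := by
      have t : (c 0 • (ι ℂ u * (ι ℂ (e 0) * ι ℂ (e 1))) + c 1 • (ι ℂ u * (ι ℂ (e 0) * ι ℂ (e 2)))
          + c 2 • (ι ℂ u * (ι ℂ (e 1) * ι ℂ (e 2)))) * ι ℂ (e 2) = 0 := by rw [hexp, zero_mul]
      rw [add_mul, add_mul, smul_mul_assoc, smul_mul_assoc, smul_mul_assoc,
        mul_assoc (ι ℂ u) (ι ℂ (e 0) * ι ℂ (e 2)) (ι ℂ (e 2)), z3_bcc, mul_zero, smul_zero,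
        mul_assoc (ι ℂ u) (ι ℂ (e 1) * ι ℂ (e 2)) (ι ℂ (e 2)), z3_bcc, mul_zero, smul_zero,
        add_zero, add_zero,
        show (ι ℂ u * (ι ℂ (e 0) * ι ℂ (e 1))) * ι ℂ (e 2)
          = ι ℂ u * ι ℂ (e 0) * ι ℂ (e 1) * ι ℂ (e 2) by noncomm_ring] at t
      exact (smul_eq_zero.mp t).resolve_right (prod4_ne_zero hq4)
    have hc1 : c 1 = 0 := by
      have t : (c 0 • (ι ℂ u * (ι ℂ (e 0) * ι ℂ (e 1))) + c 1 • (ι ℂ u * (ι ℂ (e 0) * ι ℂ (e 2)))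
          + c 2 • (ι ℂ u * (ι ℂ (e 1) * ι ℂ (e 2)))) * ι ℂ (e 1) = 0 := by rw [hexp, zero_mul]
      rw [add_mul, add_mul, smul_mul_assoc, smul_mul_assoc, smul_mul_assoc,
        mul_assoc (ι ℂ u) (ι ℂ (e 0) * ι ℂ (e 1)) (ι ℂ (e 1)), z3_bcc, mul_zero, smul_zero,
        mul_assoc (ι ℂ u) (ι ℂ (e 1) * ι ℂ (e 2)) (ι ℂ (e 1)), z3_bcb, mul_zero, smul_zero,
        add_zero, zero_add,
        show (ι ℂ u * (ι ℂ (e 0) * ι ℂ (e 2))) * ι ℂ (e 1)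
          = ι ℂ u * ι ℂ (e 0) * ι ℂ (e 2) * ι ℂ (e 1) by noncomm_ring] at t
      exact (smul_eq_zero.mp t).resolve_right (prod4_ne_zero (li_swap23' hq4))
    have hc2 : c 2 = 0 := by
      have t : (c 0 • (ι ℂ u * (ι ℂ (e 0) * ι ℂ (e 1))) + c 1 • (ι ℂ u * (ι ℂ (e 0) * ι ℂ (e 2)))
          + c 2 • (ι ℂ u * (ι ℂ (e 1) * ι ℂ (e 2)))) * ι ℂ (e 0) = 0 := by rw [hexp, zero_mul]
      rw [add_mul, add_mul, smul_mul_assoc, smul_mul_assoc, smul_mul_assoc,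
        mul_assoc (ι ℂ u) (ι ℂ (e 0) * ι ℂ (e 1)) (ι ℂ (e 0)), z3_bcb, mul_zero, smul_zero,
        mul_assoc (ι ℂ u) (ι ℂ (e 0) * ι ℂ (e 2)) (ι ℂ (e 0)), z3_bcb, mul_zero, smul_zero,
        zero_add, zero_add,
        show (ι ℂ u * (ι ℂ (e 1) * ι ℂ (e 2))) * ι ℂ (e 0)
          = ι ℂ u * ι ℂ (e 0) * ι ℂ (e 1) * ι ℂ (e 2) by
            rw [mul_assoc (ι ℂ u) (ι ℂ (e 1) * ι ℂ (e 2)) (ι ℂ (e 0)),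
              ← triple_comm (e 0) (e 1) (e 2)]; noncomm_ring] at t
      exact (smul_eq_zero.mp t).resolve_right (prod4_ne_zero hq4)
    rw [hc0, hc1, hc2, zero_smul, zero_smul, zero_smul, add_zero, add_zero] at hc
    exact prod2_ne_zero hxy hc.symm
  · intro h
    exact pluckerSpan_mono h


/-! ### Classification -/

theorem classify {P : Submodule ℂ ExtV} (hP : IsPlaneInG P) :
    (∃ (v : Vec) (V4 : Submodule ℂ Vec), v ≠ 0 ∧ v ∈ V4 ∧ Module.finrank ℂ V4 = 4 ∧
      P = Submodule.map (lmap v) V4) ∨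
    (∃ V3 : Submodule ℂ Vec, Module.finrank ℂ V3 = 3 ∧ P = pluckerSpan V3) := by
  obtain ⟨hP3, hPdec⟩ := hP
  haveI : FiniteDimensional ℂ P := FiniteDimensional.of_finrank_pos (by rw [hP3]; norm_num)
  obtain ⟨ω, hω, hPspan⟩ := exists_span_fam P hP3
  have hmem : ∀ i, ω i ∈ P := fun i => hPspan ▸ Submodule.subset_span (mem_range_self i)
  have hdec' : ∀ i, ∃ x y : Vec, ω i = ι ℂ x * ι ℂ y := by
    intro i
    obtain ⟨x, y, h⟩ := hPdec (ω i) (hmem i)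
    exact ⟨x, y, by rw [h, iota2]⟩
  choose x y hxy using hdec'
  have hne : ∀ i, ω i ≠ 0 := fun i => hω.ne_zero i
  have hpair : ∀ i, LinearIndependent ℂ ![x i, y i] := fun i =>
    linIndep_pair_of_prod_ne_zero (hxy i ▸ hne i)
  set W : Fin 3 → Submodule ℂ Vec := fun i => Submodule.span ℂ (range ![x i, y i]) with hWdef
  have hWrank : ∀ i, Module.finrank ℂ (W i) = 2 := fun i => finrank_span_fam (hpair i)
  have hxW : ∀ i, x i ∈ W i := fun i => Submodule.subset_span (by simp)
  have hyW : ∀ i, y i ∈ W i := fun i => Submodule.subset_span (by simp)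
  have hprod : ∀ i j, i ≠ j → ω i * ω j = 0 := by
    intro i j hij
    obtain ⟨a, b, hab⟩ := hPdec _ (Submodule.add_mem _ (hmem i) (hmem j))
    have hs : (ω i + ω j) * (ω i + ω j) = 0 := by rw [hab, iota2, sq_zero_w]
    rw [add_mul, mul_add, mul_add, hxy i, hxy j, sq_zero_w, sq_zero_w,
      quad_comm (x j) (y j) (x i) (y i), zero_add, add_zero] at hs
    have h2 : (2 : ℂ) • ((ι ℂ (x i) * ι ℂ (y i)) * (ι ℂ (x j) * ι ℂ (y j))) = 0 := by
      rw [two_smul]; exact hs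
    rw [hxy i, hxy j]
    exact (smul_eq_zero.mp h2).resolve_left (by norm_num)
  have hinter : ∀ i j, i ≠ j → W i ⊓ W j ≠ ⊥ := by
    intro i j hij hbot
    have hsum := (hpair i).sum_type (hpair j) (disjoint_iff.mpr hbot)
    have h4 : LinearIndependent ℂ ![x i, y i, x j, y j] := by
      have := hsum.comp (finSumFinEquiv (m := 2) (n := 2)).symm (Equiv.injective _)
      have heq : (Sum.elim ![x i, y i] ![x j, y j]) ∘ (finSumFinEquiv (m := 2) (n := 2)).symm
          = ![x i, y i, x j, y j] := by
        funext a; fin_cases a <;> rfl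
      rwa [heq] at this
    apply prod4_ne_zero h4
    have : ω i * ω j = ι ℂ (x i) * ι ℂ (y i) * ι ℂ (x j) * ι ℂ (y j) := by
      rw [hxy i, hxy j]; noncomm_ring
    rw [← this]
    exact hprod i j hij
  have hWne : ∀ i j, i ≠ j → W i ≠ W j := by
    intro i j hij heq
    have hxj' := hxW j
    have hyj' := hyW j
    rw [← heq] at hxj' hyj'
    have hxj : x j ∈ Submodule.span ℂ (range ![x i, y i]) := hxj'
    have hyj : y j ∈ Submodule.span ℂ (range ![x i, y i]) := hyj'
    rw [mem_span_pair'] at hxj hyj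
    obtain ⟨a, b, hab⟩ := hxj
    obtain ⟨cc, d, hcd⟩ := hyj
    have hωj : ω j = (a * d - b * cc) • ω i := by
      rw [hxy j, hxy i, hab, hcd, wedge_comb]
    have hp2 : LinearIndependent ℂ ![ω j, ω i] := li_pair_of_fam hω hij.symm
    rw [linearIndependent_fin2] at hp2
    simp only [Matrix.cons_val_zero, Matrix.cons_val_one, Matrix.head_cons] at hp2
    exact hp2.2 (a * d - b * cc) hωj.symm
  obtain ⟨v, hvmem, hv0⟩ := Submodule.exists_mem_ne_zero_of_ne_bot (hinter 0 1 (by decide))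
  have hvW0 : v ∈ W 0 := (Submodule.mem_inf.mp hvmem).1
  have hvW1 : v ∈ W 1 := (Submodule.mem_inf.mp hvmem).2
  have hW01 : W 0 ⊓ W 1 = Submodule.span ℂ {v} := by
    have hle : Submodule.span ℂ {v} ≤ W 0 ⊓ W 1 := by
      rw [Submodule.span_le, singleton_subset_iff]; exact hvmem
    have hr : Module.finrank ℂ (W 0 ⊓ W 1 : Submodule ℂ Vec) ≤ 1 := by
      by_contra hr'
      push_neg at hr'
      have h1 : W 0 ⊓ W 1 = W 0 :=
        Submodule.eq_of_le_of_finrank_le inf_le_left (by rw [hWrank 0]; omega)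
      have h2 : W 0 ⊓ W 1 = W 1 :=
        Submodule.eq_of_le_of_finrank_le inf_le_right (by rw [hWrank 1]; omega)
      exact hWne 0 1 (by decide) (h1.symm.trans h2)
    exact (Submodule.eq_of_le_of_finrank_le hle
      (by rw [finrank_span_singleton hv0]; exact hr)).symm
  by_cases hv2 : v ∈ W 2
  · -- sigma_{3,1} case
    left
    have hvWi : ∀ i, v ∈ W i := by
      intro i; fin_cases i
      · exact hvW0
      · exact hvW1
      · exact hv2
    have hex : ∀ i, ∃ z : Vec, LinearIndependent ℂ ![v, z] ∧
        W i = Submodule.span ℂ (range ![v, z]) :=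
      fun i => exists_pair_basis_containing (hWrank i) (hvWi i) hv0
    choose z hzli hWz using hex
    have hωc : ∀ i, ∃ cc : ℂ, cc ≠ 0 ∧ ω i = cc • (ι ℂ v * ι ℂ (z i)) := by
      intro i
      have hxle : x i ∈ Submodule.span ℂ (range ![v, z i]) := (hWz i) ▸ hxW i
      have hyle : y i ∈ Submodule.span ℂ (range ![v, z i]) := (hWz i) ▸ hyW i
      obtain ⟨a, b, hab⟩ := mem_span_pair'.mp hxle
      obtain ⟨cc, d, hcd⟩ := mem_span_pair'.mp hyle
      refine ⟨a * d - b * cc, ?_, ?_⟩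
      · intro h0; exact hne i (by rw [hxy i, hab, hcd, wedge_comb, h0, zero_smul])
      · rw [hxy i, hab, hcd, wedge_comb]
    choose cc hcc0 hωcc using hωc
    set V4 : Submodule ℂ Vec := Submodule.span ℂ (range ![v, z 0, z 1, z 2]) with hV4def
    have hvV4 : v ∈ V4 := Submodule.subset_span (by simp)
    have hzV4 : ∀ i : Fin 3, z i ∈ V4 := by
      intro i
      apply Submodule.subset_span
      fin_cases i <;> simp [Matrix.range_cons]
    have hPeq : P = Submodule.map (lmap v) V4 := by
      apply le_antisymm
      · rw [hPspan, Submodule.span_le]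
        rintro _ ⟨i, rfl⟩
        rw [SetLike.mem_coe, hωcc i]
        exact Submodule.smul_mem _ _ ⟨z i, hzV4 i, rfl⟩
      · rw [hV4def, Submodule.map_span, Submodule.span_le]
        rintro _ ⟨w, hw, rfl⟩
        have hz : ∀ i : Fin 3, lmap v (z i) ∈ P := by
          intro i
          have : (cc i)⁻¹ • ω i ∈ P := Submodule.smul_mem _ _ (hmem i)
          rwa [hωcc i, smul_smul, inv_mul_cancel₀ (hcc0 i), one_smul] at this
        obtain ⟨j, rfl⟩ := hw
        fin_cases j
        · show lmap v v ∈ P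
          have : lmap v v = 0 := ι_sq_zero v
          rw [this]; exact P.zero_mem
        · exact hz 0
        · exact hz 1
        · exact hz 2
    have h4rank : Module.finrank ℂ V4 = 4 := by
      have := lmap_rank hv0 hvV4
      rw [← hPeq, hP3] at this
      omega
    exact ⟨v, V4, hv0, hvV4, h4rank, hPeq⟩
  · -- sigma_{2,2} case
    right
    obtain ⟨u, humem, hu0⟩ := Submodule.exists_mem_ne_zero_of_ne_bot (hinter 0 2 (by decide))
    obtain ⟨t, htmem, ht0⟩ := Submodule.exists_mem_ne_zero_of_ne_bot (hinter 1 2 (by decide))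
    have huW0 : u ∈ W 0 := (Submodule.mem_inf.mp humem).1
    have huW2 : u ∈ W 2 := (Submodule.mem_inf.mp humem).2
    have htW1 : t ∈ W 1 := (Submodule.mem_inf.mp htmem).1
    have htW2 : t ∈ W 2 := (Submodule.mem_inf.mp htmem).2
    have hunv : u ∉ Submodule.span ℂ {v} := by
      intro h
      obtain ⟨a, rfl⟩ := Submodule.mem_span_singleton.mp h
      have ha : a ≠ 0 := by rintro rfl; exact hu0 (zero_smul ℂ v)
      exact hv2 (by
        have := Submodule.smul_mem (W 2) a⁻¹ huW2
        rwa [smul_smul, inv_mul_cancel₀ ha, one_smul] at this)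
    have W2le : W 2 ≤ W 0 ⊔ W 1 := by
      by_cases hzu : t ∈ Submodule.span ℂ {u}
      · exfalso
        obtain ⟨a, hat⟩ := Submodule.mem_span_singleton.mp hzu
        have ha : a ≠ 0 := by rintro rfl; exact ht0 (by rw [← hat, zero_smul])
        have huW1 : u ∈ W 1 := by
          have := Submodule.smul_mem (W 1) a⁻¹ htW1
          rwa [← hat, smul_smul, inv_mul_cancel₀ ha, one_smul] at this
        have : u ∈ W 0 ⊓ W 1 := Submodule.mem_inf.mpr ⟨huW0, huW1⟩
        rw [hW01] at this
        exact hunv this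
      · have hiz : LinearIndependent ℂ ![u, t] := by
          rw [LinearIndependent.pair_iff' hu0]
          intro a ha
          exact hzu (Submodule.mem_span_singleton.mpr ⟨a, ha⟩)
        have hle2 : Submodule.span ℂ (range ![u, t]) ≤ W 2 := by
          rw [Submodule.span_le]
          rintro w hw
          simp only [Matrix.range_cons_cons_empty] at hw
          rcases hw with rfl | rfl
          · exact huW2
          · exact htW2
        have heq2 : Submodule.span ℂ (range ![u, t]) = W 2 :=
          Submodule.eq_of_le_of_finrank_le hle2
            (by rw [hWrank 2, finrank_span_fam hiz])
        rw [← heq2, Submodule.span_le]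
        rintro w hw
        simp only [Matrix.range_cons_cons_empty] at hw
        rcases hw with rfl | rfl
        · exact le_sup_left (α := Submodule ℂ Vec) (a := W 0) (b := W 1) huW0
        · exact le_sup_right (α := Submodule ℂ Vec) (a := W 0) (b := W 1) htW1
    have h3rank : Module.finrank ℂ (W 0 ⊔ W 1 : Submodule ℂ Vec) = 3 := by
      have hsi := Submodule.finrank_sup_add_finrank_inf_eq (W 0) (W 1)
      rw [hWrank 0, hWrank 1, hW01, finrank_span_singleton hv0] at hsi
      omega
    have hWle : ∀ i, W i ≤ W 0 ⊔ W 1 := by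
      intro i; fin_cases i
      · exact le_sup_left
      · exact le_sup_right
      · exact W2le
    have hPeq : P = pluckerSpan (W 0 ⊔ W 1) := by
      apply le_antisymm
      · rw [hPspan, Submodule.span_le]
        rintro _ ⟨i, rfl⟩
        rw [SetLike.mem_coe, hxy i]
        exact mem_pluckerSpan (hWle i (hxW i)) (hWle i (hyW i))
      · obtain ⟨g, hg, hgsp⟩ := pluckerSpan_rank3 h3rank
        rw [hgsp]
        haveI : FiniteDimensional ℂ (Submodule.span ℂ (range g)) :=
          FiniteDimensional.span_of_finite ℂ (finite_range g)
        apply le_of_eq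
        refine (Submodule.eq_of_le_of_finrank_le ?_ ?_).symm
        · rw [← hgsp, hPspan]
          rw [Submodule.span_le]
          rintro _ ⟨i, rfl⟩
          rw [SetLike.mem_coe, hxy i]
          exact mem_pluckerSpan (hWle i (hxW i)) (hWle i (hyW i))
        · rw [finrank_span_fam hg, hP3]
    exact ⟨W 0 ⊔ W 1, h3rank, hPeq⟩

/-! ### Cardinality -/

open Cardinal

theorem mk_fd_le {M : Type} [AddCommGroup M] [Module ℂ M] [FiniteDimensional ℂ M] :
    Cardinal.mk M ≤ #ℂ := by
  have e := (Module.finBasis ℂ M).equivFun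
  rw [Cardinal.mk_congr e.toEquiv]
  rw [Cardinal.mk_arrow, Cardinal.lift_id, Cardinal.lift_id,
    Cardinal.mk_fintype (Fin (Module.finrank ℂ M)), Fintype.card_fin, Cardinal.power_natCast]
  exact Cardinal.power_nat_le (Cardinal.aleph0_le_mk ℂ)

theorem mk_submodule_le {M : Type} [AddCommGroup M] [Module ℂ M] [FiniteDimensional ℂ M]
    [Infinite M] : #(Submodule ℂ M) ≤ #ℂ := by
  have hsurj : Function.Surjective (fun S : Finset M => Submodule.span ℂ (S : Set M)) := by
    intro N
    obtain ⟨S, hS⟩ := (IsNoetherian.noetherian N)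
    exact ⟨S, hS⟩
  calc #(Submodule ℂ M) ≤ #(Finset M) := Cardinal.mk_le_of_surjective hsurj
    _ = #M := Cardinal.mk_finset_of_infinite M
    _ ≤ #ℂ := mk_fd_le

/-- the standard basis of `Vec` -/
def ee : Fin 5 → Vec := fun i => Pi.single i 1

theorem li_ee : LinearIndependent ℂ ee := by
  have := (Pi.basisFun ℂ (Fin 5)).linearIndependent
  have heq : ⇑(Pi.basisFun ℂ (Fin 5)) = ee := by
    funext i; rw [Pi.basisFun_apply]; rfl
  rwa [heq] at this

theorem ee_ne_zero (i : Fin 5) : ee i ≠ 0 := fun h => by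
  have := congrFun h i
  rw [ee, Pi.single_eq_same] at this
  exact one_ne_zero this

/-- the family spanning `V4 t` -/
def vfam (t : ℂ) : Fin 4 → Vec := ![ee 0, ee 1, ee 2, ee 3 + t • ee 4]

theorem li_vfam (t : ℂ) : LinearIndependent ℂ (vfam t) := by
  rw [Fintype.linearIndependent_iff]
  intro g hg
  rw [Fin.sum_univ_four] at hg
  simp only [vfam, Matrix.cons_val_zero, Matrix.cons_val_one, Matrix.head_cons,
    Matrix.cons_val_two, Matrix.tail_cons, Matrix.cons_val_three] at hg
  have h0 := congrFun hg 0
  have h1 := congrFun hg 1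
  have h2 := congrFun hg 2
  have h3 := congrFun hg 3
  simp [ee, Pi.single_apply] at h0 h1 h2 h3
  intro i; fin_cases i <;> simp_all

theorem planeFam_isPlane (t : ℂ) :
    IsPlaneInG (Submodule.map (lmap (ee 0)) (Submodule.span ℂ (range (vfam t)))) := by
  apply sigma31_isPlane (ee_ne_zero 0)
  · exact Submodule.subset_span ⟨0, rfl⟩
  · exact finrank_span_fam (li_vfam t)

theorem planeFam_inj : Function.Injective
    (fun t : ℂ => Submodule.map (lmap (ee 0)) (Submodule.span ℂ (range (vfam t)))) := by
  intro t s hts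
  simp only at hts
  have hmem : lmap (ee 0) (ee 3 + t • ee 4)
      ∈ Submodule.map (lmap (ee 0)) (Submodule.span ℂ (range (vfam t))) :=
    ⟨ee 3 + t • ee 4, Submodule.subset_span ⟨3, rfl⟩, rfl⟩
  rw [hts] at hmem
  obtain ⟨w, hw, hww⟩ := hmem
  -- hww : ι e0 * ι w = ι e0 * ι (e3 + t e4)
  have hdiff : ι ℂ (ee 0) * ι ℂ (w - (ee 3 + t • ee 4)) = 0 := by
    rw [map_sub, mul_sub]
    rw [show ι ℂ (ee 0) * ι ℂ w = lmap (ee 0) w from rfl,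
      show ι ℂ (ee 0) * ι ℂ (ee 3 + t • ee 4) = lmap (ee 0) (ee 3 + t • ee 4) from rfl, hww,
      sub_self]
  rw [lmap_zero_iff (ee_ne_zero 0)] at hdiff
  obtain ⟨a, ha⟩ := Submodule.mem_span_singleton.mp hdiff
  -- w = e3 + t e4 + a e0
  have hwv : w = ee 3 + t • ee 4 + a • ee 0 := by
    rw [sub_eq_iff_eq_add.mp ha.symm]; abel
  -- linear functional coord4 - s * coord3 vanishes on V4 s
  set φ : Vec →ₗ[ℂ] ℂ := LinearMap.proj 4 - s • LinearMap.proj 3 with hφ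
  have hφgen : Submodule.span ℂ (range (vfam s)) ≤ LinearMap.ker φ := by
    rw [Submodule.span_le]
    rintro _ ⟨j, rfl⟩
    rw [SetLike.mem_coe, LinearMap.mem_ker]
    fin_cases j <;>
      simp [hφ, vfam, ee, Pi.single_apply]
  have hφw : φ w = 0 := hφgen hw
  rw [hwv] at hφw
  simp [hφ, ee, Pi.single_apply] at hφw
  linear_combination hφw

theorem mk_planes : #({P : Submodule ℂ ExtV // IsPlaneInG P}) = #ℂ := by
  apply le_antisymm
  · -- inject into Fin 3 → Vec × Vec
    have h1 : ∀ P : {P : Submodule ℂ ExtV // IsPlaneInG P}, ∃ p : Fin 3 → Vec × Vec,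
        (P : Submodule ℂ ExtV)
          = Submodule.span ℂ (range fun i => ι ℂ (p i).1 * ι ℂ (p i).2) := by
      rintro ⟨P, hP3, hPdec⟩
      haveI : FiniteDimensional ℂ P := FiniteDimensional.of_finrank_pos (by rw [hP3]; norm_num)
      obtain ⟨ω, hω, hsp⟩ := exists_span_fam P hP3
      have hd : ∀ i, ∃ pq : Vec × Vec, ω i = ι ℂ pq.1 * ι ℂ pq.2 := by
        intro i
        obtain ⟨a, b, h⟩ := hPdec (ω i) (hsp ▸ Submodule.subset_span (mem_range_self i))
        exact ⟨(a, b), by rw [h, iota2]⟩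
      choose p hp using hd
      refine ⟨p, ?_⟩
      have : ω = fun i => ι ℂ (p i).1 * ι ℂ (p i).2 := funext hp
      show P = _
      rw [hsp, this]
    choose f hf using h1
    have hinj : Function.Injective f := by
      intro P Q h
      apply Subtype.ext
      rw [hf P, hf Q, h]
    exact le_trans (Cardinal.mk_le_of_injective hinj) mk_fd_le
  · refine Cardinal.mk_le_of_injective (f := fun t : ℂ =>
      (⟨Submodule.map (lmap (ee 0)) (Submodule.span ℂ (range (vfam t))),
        planeFam_isPlane t⟩ : {P : Submodule ℂ ExtV // IsPlaneInG P})) ?_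
    intro a b h
    exact planeFam_inj (congrArg Subtype.val h)

theorem li4std : LinearIndependent ℂ ![ee 0, ee 1, ee 2, ee 3] := by
  have := li_ee.comp Fin.castSucc (Fin.castSucc_injective 4)
  have heq : ee ∘ Fin.castSucc = ![ee 0, ee 1, ee 2, ee 3] := by
    funext i; fin_cases i <;> rfl
  rwa [heq] at this

theorem e01t_ne (t : ℂ) : ee 0 + t • ee 1 ≠ 0 := by
  intro h
  have := congrFun h 0
  simp [ee, Pi.single_apply] at this

theorem mk_flags : #({F : Submodule ℂ Vec × Submodule ℂ Vec //
    Module.finrank ℂ F.1 = 1 ∧ Module.finrank ℂ F.2 = 4 ∧ F.1 ≤ F.2}) = #ℂ := by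
  apply le_antisymm
  · calc #_ ≤ #(Submodule ℂ Vec × Submodule ℂ Vec) := Cardinal.mk_subtype_le _
      _ = #(Submodule ℂ Vec) * #(Submodule ℂ Vec) := by
          simp [Cardinal.mk_prod]
      _ ≤ #ℂ * #ℂ := mul_le_mul' mk_submodule_le mk_submodule_le
      _ = #ℂ := Cardinal.mul_eq_self (Cardinal.aleph0_le_mk ℂ)
  · refine Cardinal.mk_le_of_injective (f := fun t : ℂ =>
      ⟨(Submodule.span ℂ {ee 0 + t • ee 1}, Submodule.span ℂ (range ![ee 0, ee 1, ee 2, ee 3])),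
        finrank_span_singleton (e01t_ne t), finrank_span_fam li4std, ?_⟩) ?_
    · rw [Submodule.span_le, singleton_subset_iff]
      exact Submodule.add_mem _ (Submodule.subset_span ⟨0, rfl⟩)
        (Submodule.smul_mem _ _ (Submodule.subset_span ⟨1, rfl⟩))
    · intro a b h
      have h1 : Submodule.span ℂ {ee 0 + a • ee 1} = Submodule.span ℂ {ee 0 + b • ee 1} :=
        congrArg (Prod.fst ∘ Subtype.val) h
      have hmem : ee 0 + a • ee 1 ∈ Submodule.span ℂ {ee 0 + b • ee 1} := by
        rw [← h1]; exact Submodule.mem_span_singleton_self _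
      obtain ⟨c, hc⟩ := Submodule.mem_span_singleton.mp hmem
      have h0 := congrFun hc 0
      have h1' := congrFun hc 1
      simp [ee, Pi.single_apply] at h0 h1'
      -- h0 : c = 1, h1' : c * b = a
      rw [h0] at h1'
      rw [← h1']; ring

theorem mk_rhs : #({F : Submodule ℂ Vec × Submodule ℂ Vec //
      Module.finrank ℂ F.1 = 1 ∧ Module.finrank ℂ F.2 = 4 ∧ F.1 ≤ F.2} ⊕
    {V₃ : Submodule ℂ Vec // Module.finrank ℂ V₃ = 3}) = #ℂ := by
  rw [Cardinal.mk_sum]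
  simp only [Cardinal.lift_id]
  rw [mk_flags]
  apply le_antisymm
  · calc #ℂ + #({V₃ : Submodule ℂ Vec // Module.finrank ℂ V₃ = 3})
        ≤ #ℂ + #ℂ := add_le_add le_rfl (le_trans (Cardinal.mk_subtype_le _) mk_submodule_le)
      _ = #ℂ := Cardinal.add_eq_self (Cardinal.aleph0_le_mk ℂ)
  · exact self_le_add_right _ _

end
end Stmt7Aux

/-- Every plane contained in `Gr(2,5)` under the Plücker embedding is either a
`σ_{3,1}`-plane (the lines in a fixed `ℙ³ = P(V₄)` through a fixed point `p = P(V₁)`)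
or a `σ_{2,2}`-plane (all lines contained in a fixed plane `ℙ² = P(V₃)`).
Consequently the Fano variety of planes in `Gr(2,5)` is the disjoint union
`Gr(1,4,5) ⊔ Gr(3,5)`. -/
theorem stmt7 :
    (∀ P : Submodule ℂ (ExteriorAlgebra ℂ (Fin 5 → ℂ)), IsPlaneInG P →
      (∃ V₁ V₄ : Submodule ℂ (Fin 5 → ℂ),
          Module.finrank ℂ V₁ = 1 ∧ Module.finrank ℂ V₄ = 4 ∧ V₁ ≤ V₄ ∧
          ∀ W : Submodule ℂ (Fin 5 → ℂ), Module.finrank ℂ W = 2 →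
            (pluckerSpan W ≤ P ↔ V₁ ≤ W ∧ W ≤ V₄)) ∨
      (∃ V₃ : Submodule ℂ (Fin 5 → ℂ), Module.finrank ℂ V₃ = 3 ∧
          ∀ W : Submodule ℂ (Fin 5 → ℂ), Module.finrank ℂ W = 2 →
            (pluckerSpan W ≤ P ↔ W ≤ V₃))) ∧
    Nonempty ({P : Submodule ℂ (ExteriorAlgebra ℂ (Fin 5 → ℂ)) // IsPlaneInG P}
      ≃ ({F : Submodule ℂ (Fin 5 → ℂ) × Submodule ℂ (Fin 5 → ℂ) //
            Module.finrank ℂ F.1 = 1 ∧ Module.finrank ℂ F.2 = 4 ∧ F.1 ≤ F.2} ⊕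
         {V₃ : Submodule ℂ (Fin 5 → ℂ) // Module.finrank ℂ V₃ = 3})) := by
  constructor
  · intro P hP
    rcases Stmt7Aux.classify hP with ⟨v, V4, hv, hvV, h4, rfl⟩ | ⟨V3, h3, rfl⟩
    · left
      exact ⟨Submodule.span ℂ {v}, V4, finrank_span_singleton hv, h4,
        by rw [Submodule.span_le, Set.singleton_subset_iff]; exact hvV,
        fun W hW => Stmt7Aux.sigma31_char hv hvV hW⟩
    · right
      exact ⟨V3, h3, fun W hW => Stmt7Aux.sigma22_char h3 hW⟩
  · exact Cardinal.eq.mp (Stmt7Aux.mk_planes.trans Stmt7Aux.mk_rhs.symm)
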